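/- arXiv:2102.11840 — 3 statements merged into one kernel-verified Lean document; each statement's English description precedes it below -/
import Mathlib

section
/- Let d, m ∈ ℕ, let x₁,...,x_m ∈ ℝᵈ \ {0} be pairwise linearly independent, let W: Ω → ℝᵈ be a standard normal random vector, and define G ∈ ℝ^{m×m} by G_{i,j} = P(⟨W, xᵢ⟩ ≥ 0, ⟨W, xⱼ⟩ ≥ 0) and H ∈ ℝ^{m×m} by H_{i,j} = ⟨xᵢ, xⱼ⟩ G_{i,j}. Then the smallest eigenvalues of G and of H are both strictly positive (i.e., G and H are positive definite). -/
/-!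
With `Aᵢ = {⟨W, xᵢ⟩ ≥ 0}`, `G` and `H` are the Gram matrices in `L²(P)` of the functions
`1_{Aᵢ}` and `1_{Aᵢ} xᵢ`, so it suffices that these are linearly independent. Suppose
`∑ⱼ cⱼ 1_{Aⱼ} yⱼ = 0` almost surely, where `yⱼ = 1` resp. `yⱼ = xⱼ`. Since no `xⱼ` is a multiple
of `xᵢ`, some `w₀ ⊥ xᵢ` has `⟨w₀, xⱼ⟩ ≠ 0` for all `j ≠ i`; for `W` near `w₀ + t xᵢ` and near
`w₀ - t xᵢ` the signs of the `⟨W, xⱼ⟩`, `j ≠ i`, agree while that of `⟨W, xᵢ⟩` flips. The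
Gaussian law of `W` charges every open set, so such sample points exist off any null set, and
subtracting the relation at two of them leaves `cᵢ yᵢ = 0`.
-/

open MeasureTheory ProbabilityTheory Filter Topology RealInnerProductSpace

section InnerSign

variable {E : Type*} [NormedAddCommGroup E] [InnerProductSpace ℝ E] {ι : Type*} [Finite ι]

open Submodule in
theorem exists_inner_eq_zero_and_forall_inner_ne_zero {v : E} {y : ι → E}
    (hy : ∀ j, y j ∉ ℝ ∙ v) : ∃ w : E, ⟪w, v⟫ = 0 ∧ ∀ j, ⟪w, y j⟫ ≠ 0 := by
  set K := (ℝ ∙ v)ᗮ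
  set p : ι → Submodule ℝ K := fun j => (ℝ ∙ y j)ᗮ.comap K.subtype
  have hp : ∀ j, p j ≠ ⊤ := by
    intro j hj
    have hK : K ≤ (ℝ ∙ y j)ᗮ := fun w hw => (hj ▸ mem_top : (⟨w, hw⟩ : K) ∈ p j)
    have hspan := orthogonal_le hK
    rw [orthogonal_orthogonal, orthogonal_orthogonal] at hspan
    exact hy j (hspan (mem_span_singleton_self _))
  obtain ⟨w, hw⟩ : ∃ w : K, ∀ j, w ∉ p j := by
    by_contra! h
    obtain ⟨j, hj⟩ := Subspace.exists_eq_top_of_iUnion_eq_univ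
      (Set.eq_univ_of_forall fun w => Set.mem_iUnion.2 (h w))
    exact hp j hj
  exact ⟨w, mem_orthogonal_singleton_iff_inner_left.1 w.2,
    fun j hj => hw j (mem_orthogonal_singleton_iff_inner_left.2 hj)⟩

theorem exists_isOpen_inner_sign_flip {v : E} (hv : v ≠ 0) {y : ι → E}
    (hy : ∀ j, y j ∉ ℝ ∙ v) :
    ∃ U₁ U₂ : Set E, IsOpen U₁ ∧ IsOpen U₂ ∧ U₁.Nonempty ∧ U₂.Nonempty ∧
      ∀ w₁ ∈ U₁, ∀ w₂ ∈ U₂,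
        0 < ⟪w₁, v⟫ ∧ ⟪w₂, v⟫ < 0 ∧ ∀ j, (0 ≤ ⟪w₁, y j⟫ ↔ 0 ≤ ⟪w₂, y j⟫) := by
  obtain ⟨w₀, hw₀v, hw₀y⟩ := exists_inner_eq_zero_and_forall_inner_ne_zero hy
  set V : Set E := {w | ∀ j, 0 < ⟪w, y j⟫ * ⟪w₀, y j⟫}
  have hV : IsOpen V := by
    simp only [V, Set.ofPred_forall]
    exact isOpen_iInter_of_finite fun j => isOpen_lt continuous_const (by fun_prop)
  have hnear : ∀ᶠ t in 𝓝 (0 : ℝ), w₀ + t • v ∈ V := by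
    refine ((by fun_prop : Continuous fun t : ℝ => w₀ + t • v).tendsto' 0 w₀ (by simp)).eventually
      (hV.mem_nhds fun j => mul_self_pos.2 (hw₀y j))
  have hline : ∀ t : ℝ, ⟪w₀ + t • v, v⟫ = t * ‖v‖ ^ 2 := fun t => by
    rw [inner_add_left, real_inner_smul_left, hw₀v, real_inner_self_eq_norm_sq, zero_add]
  obtain ⟨t₁, ht₁V, ht₁⟩ := ((hnear.filter_mono nhdsWithin_le_nhds).and
    (self_mem_nhdsWithin : ∀ᶠ t in 𝓝[>] (0 : ℝ), 0 < t)).exists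
  obtain ⟨t₂, ht₂V, ht₂⟩ := ((hnear.filter_mono nhdsWithin_le_nhds).and
    (self_mem_nhdsWithin : ∀ᶠ t in 𝓝[<] (0 : ℝ), t < 0)).exists
  have hvpos : 0 < ‖v‖ ^ 2 := by positivity
  refine ⟨V ∩ {w | 0 < ⟪w, v⟫}, V ∩ {w | ⟪w, v⟫ < 0},
    hV.inter (isOpen_lt continuous_const (by fun_prop)),
    hV.inter (isOpen_lt (by fun_prop) continuous_const),
    ⟨_, ht₁V, by rw [Set.mem_ofPred_eq, hline]; positivity⟩,
    ⟨_, ht₂V, by rw [Set.mem_ofPred_eq, hline]; exact mul_neg_of_neg_of_pos ht₂ hvpos⟩,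
    fun w₁ h₁ w₂ h₂ => ⟨h₁.2, h₂.2, fun j => ?_⟩⟩
  have := h₁.1 j
  have := h₂.1 j
  constructor <;> intro h <;> nlinarith

end InnerSign

section FullSupport

variable {Ω : Type*} [MeasurableSpace Ω] {P : Measure Ω}

theorem isOpenPosMeasure_gaussianReal (μ : ℝ) {v : NNReal} (hv : v ≠ 0) :
    (gaussianReal μ v).IsOpenPosMeasure :=
  (gaussianReal_absolutelyContinuous' μ hv).isOpenPosMeasure

theorem ProbabilityTheory.iIndepFun.isOpenPosMeasure_map_pi {ι : Type*} [Fintype ι]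
    {β : ι → Type*} [∀ i, TopologicalSpace (β i)] [∀ i, MeasurableSpace (β i)] {X : ∀ i, Ω → β i}
    (hX : ∀ i, AEMeasurable (X i) P) (h : iIndepFun X P)
    [∀ i, (P.map (X i)).IsOpenPosMeasure] :
    (P.map fun ω i => X i ω).IsOpenPosMeasure := by
  have := h.isProbabilityMeasure
  rw [h.map_fun_eq_pi_map hX]
  infer_instance

theorem isOpenPosMeasure_map_of_iIndepFun_gaussianReal {ι : Type*} [Fintype ι]
    {W : Ω → EuclideanSpace ℝ ι} (hmeas : ∀ k, Measurable fun ω => W ω k)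
    (hlaw : ∀ k, P.map (fun ω => W ω k) = gaussianReal 0 1)
    (hindep : iIndepFun (fun k ω => W ω k) P) :
    (P.map W).IsOpenPosMeasure := by
  have : ∀ k, (P.map fun ω => W ω k).IsOpenPosMeasure := fun k =>
    hlaw k ▸ isOpenPosMeasure_gaussianReal 0 one_ne_zero
  have := hindep.isOpenPosMeasure_map_pi fun k => (hmeas k).aemeasurable
  rw [show W = WithLp.toLp 2 ∘ fun ω k => W ω k from rfl,
    ← Measure.map_map (WithLp.measurable_toLp 2 _) (measurable_pi_lambda _ hmeas)]
  exact (PiLp.continuous_toLp 2 _).isOpenPosMeasure_map (WithLp.toLp_surjective 2)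

theorem exists_mem_of_ae_of_isOpenPosMeasure_map {T : Type*} [TopologicalSpace T]
    [MeasurableSpace T] [OpensMeasurableSpace T] {X : Ω → T} (hX : Measurable X)
    [(P.map X).IsOpenPosMeasure] {p : Ω → Prop} (hp : ∀ᵐ ω ∂P, p ω) {U : Set T}
    (hU : IsOpen U) (hne : U.Nonempty) : ∃ ω, X ω ∈ U ∧ p ω := by
  have : P (X ⁻¹' U) ≠ 0 := by
    rw [← Measure.map_apply hX hU.measurableSet]
    exact hU.measure_ne_zero _ hne
  exact Measure.exists_mem_of_measure_ne_zero_of_ae this (ae_restrict_of_ae hp)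

end FullSupport

section SignFlip

variable {Ω : Type*} [MeasurableSpace Ω] {P : Measure Ω} {ι κ : Type*} [Fintype ι] [Finite κ]

theorem exists_inner_sign_flip_of_ae {W : Ω → EuclideanSpace ℝ ι} (hW : Measurable W)
    [(P.map W).IsOpenPosMeasure] {x : κ → EuclideanSpace ℝ ι} {i : κ} (hxi : x i ≠ 0)
    (hxj : ∀ j ≠ i, x j ∉ ℝ ∙ x i) {p : Ω → Prop} (hp : ∀ᵐ ω ∂P, p ω) :
    ∃ ω₁ ω₂, p ω₁ ∧ p ω₂ ∧ 0 ≤ ⟪W ω₁, x i⟫ ∧ ¬ 0 ≤ ⟪W ω₂, x i⟫ ∧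
      ∀ j ≠ i, (0 ≤ ⟪W ω₁, x j⟫ ↔ 0 ≤ ⟪W ω₂, x j⟫) := by
  obtain ⟨U₁, U₂, hU₁, hU₂, hne₁, hne₂, hflip⟩ :=
    exists_isOpen_inner_sign_flip (y := fun j : {j // j ≠ i} => x j) hxi fun j => hxj j j.2
  obtain ⟨ω₁, hω₁, hp₁⟩ := exists_mem_of_ae_of_isOpenPosMeasure_map hW hp hU₁ hne₁
  obtain ⟨ω₂, hω₂, hp₂⟩ := exists_mem_of_ae_of_isOpenPosMeasure_map hW hp hU₂ hne₂
  obtain ⟨h₁, h₂, hsign⟩ := hflip _ hω₁ _ hω₂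
  exact ⟨ω₁, ω₂, hp₁, hp₂, h₁.le, h₂.not_ge, fun j hj => hsign ⟨j, hj⟩⟩

end SignFlip

section GramIndicator

variable {Ω : Type*} [MeasurableSpace Ω] {μ : Measure Ω} [IsFiniteMeasure μ]
  {E : Type*} [NormedAddCommGroup E] [InnerProductSpace ℝ E] {ι : Type*} {A : ι → Set Ω}

theorem gram_indicatorConstLp [CompleteSpace E] (hA : ∀ i, MeasurableSet (A i)) (y : ι → E) :
    Matrix.gram ℝ (fun i => indicatorConstLp 2 (hA i) (measure_ne_top μ _) (y i)) =
      Matrix.of fun i j => μ.real (A i ∩ A j) * ⟪y i, y j⟫ := by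
  ext i j
  simp [Matrix.gram, L2.inner_indicatorConstLp_indicatorConstLp]

theorem linearIndependent_indicatorConstLp [Fintype ι] (hA : ∀ i, MeasurableSet (A i)) {y : ι → E}
    (hy : ∀ i, y i ≠ 0)
    (hsep : ∀ i (p : Ω → Prop), (∀ᵐ ω ∂μ, p ω) →
      ∃ ω₁ ω₂, p ω₁ ∧ p ω₂ ∧ ω₁ ∈ A i ∧ ω₂ ∉ A i ∧ ∀ j ≠ i, (ω₁ ∈ A j ↔ ω₂ ∈ A j)) :
    LinearIndependent ℝ (fun i => indicatorConstLp 2 (hA i) (measure_ne_top μ _) (y i)) := by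
  rw [Fintype.linearIndependent_iff]
  intro c hc i
  set F : ι → Lp E 2 μ := fun j => indicatorConstLp 2 (hA j) (measure_ne_top μ _) (y j)
  set f : Ω → E := fun ω => ∑ j, (A j).indicator (fun _ => c j • y j) ω
  have hf : ∀ᵐ ω ∂μ, f ω = 0 := by
    have hsum := Lp.coeFn_fun_finsetSum Finset.univ fun j => c j • F j
    rw [hc] at hsum
    filter_upwards [hsum, Lp.coeFn_zero E 2 μ, ae_all_iff.2 fun j => Lp.coeFn_smul (c j) (F j),
      ae_all_iff.2 fun j => (indicatorConstLp_coeFn : ⇑(F j) =ᵐ[μ] _)]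
      with ω hsum hzero hsmul hF
    rw [hzero, Pi.zero_apply] at hsum
    convert hsum.symm using 1
    refine Finset.sum_congr rfl fun j _ => ?_
    rw [hsmul j, Pi.smul_apply, hF j]
    by_cases hω : ω ∈ A j <;> simp [hω]
  obtain ⟨ω₁, ω₂, h₁, h₂, hi₁, hi₂, hj⟩ := hsep i _ hf
  have : f ω₁ - f ω₂ = c i • y i := by
    rw [← Finset.sum_sub_distrib, Finset.sum_eq_single i]
    · simp [hi₁, hi₂]
    · intro j _ hji
      by_cases hω : ω₁ ∈ A j
      · simp [hω, (hj j hji).mp hω]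
      · simp [hω, mt (hj j hji).mpr hω]
    · simp
  rw [h₁, h₂, sub_zero, eq_comm, smul_eq_zero] at this
  exact this.resolve_right (hy i)

end GramIndicator

/-- For pairwise linearly independent nonzero data `x₁, …, x_m ∈ ℝᵈ` and a `d`-dimensional
standard Gaussian vector `W` (i.e. with independent standard normal coordinates), the Gram-type
matrices `G i j = P(⟨W, xᵢ⟩ ≥ 0, ⟨W, xⱼ⟩ ≥ 0)` and `H i j = ⟨xᵢ, xⱼ⟩ G i j` are
positive definite (equivalently, their smallest eigenvalues are strictly positive). -/
theorem gram_matrices_posDef_of_gaussian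
    {Ω : Type*} [MeasurableSpace Ω] (P : Measure Ω) [IsProbabilityMeasure P]
    (d m : ℕ) (x : Fin m → EuclideanSpace ℝ (Fin d))
    (hx0 : ∀ i, x i ≠ 0)
    (hind : ∀ (l : ℝ) (i j : Fin m), i ≠ j → x i ≠ l • x j)
    (W : Ω → EuclideanSpace ℝ (Fin d))
    (hmeas : ∀ k : Fin d, Measurable fun ω => W ω k)
    (hlaw : ∀ k : Fin d, Measure.map (fun ω => W ω k) P = gaussianReal 0 1)
    (hindep : iIndepFun
      (fun k ω => W ω k) P)
    (G H : Matrix (Fin m) (Fin m) ℝ)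
    (hG : ∀ i j, G i j =
      (P {ω | 0 ≤ (inner ℝ (W ω) (x i) : ℝ) ∧ 0 ≤ (inner ℝ (W ω) (x j) : ℝ)}).toReal)
    (hH : ∀ i j, H i j = (inner ℝ (x i) (x j) : ℝ) * G i j) :
    G.PosDef ∧ H.PosDef := by
  have hW : Measurable W := (WithLp.measurable_toLp 2 _).comp (measurable_pi_lambda _ hmeas)
  have := isOpenPosMeasure_map_of_iIndepFun_gaussianReal hmeas hlaw hindep
  set A : Fin m → Set Ω := fun i => {ω | 0 ≤ ⟪W ω, x i⟫}
  have hA : ∀ i, MeasurableSet (A i) := fun i =>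
    measurableSet_le measurable_const (hW.inner measurable_const)
  have hsep : ∀ i (p : Ω → Prop), (∀ᵐ ω ∂P, p ω) →
      ∃ ω₁ ω₂, p ω₁ ∧ p ω₂ ∧ ω₁ ∈ A i ∧ ω₂ ∉ A i ∧ ∀ j ≠ i, (ω₁ ∈ A j ↔ ω₂ ∈ A j) :=
    fun i _ hp => exists_inner_sign_flip_of_ae hW (hx0 i) (fun j hj hmem => by
      obtain ⟨l, hl⟩ := Submodule.mem_span_singleton.1 hmem
      exact hind l j i hj hl.symm) hp
  have hG' : G = Matrix.gram ℝ fun i => indicatorConstLp 2 (hA i) (measure_ne_top P _) (1 : ℝ) := by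
    ext i j
    rw [gram_indicatorConstLp, Matrix.of_apply, hG, real_inner_self_eq_norm_sq, norm_one,
      one_pow, mul_one]
    rfl
  have hH' : H = Matrix.gram ℝ fun i => indicatorConstLp 2 (hA i) (measure_ne_top P _) (x i) := by
    ext i j
    rw [gram_indicatorConstLp, hH, hG, mul_comm]
    rfl
  rw [hG', hH']
  exact ⟨Matrix.posDef_gram_of_linearIndependent
      (linearIndependent_indicatorConstLp hA (fun _ => one_ne_zero) hsep),
    Matrix.posDef_gram_of_linearIndependent (linearIndependent_indicatorConstLp hA hx0 hsep)⟩
end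

section
/- Let X be a standard normal random variable, A an event, and assume X and the indicator 1_A are independent. Then X²·1_A is sub-exponential with parameters (2, 4), i.e., for all λ ∈ (-1/4, 1/4) it holds that E[exp(λ(X²1_A - E[X²1_A]))] ≤ exp(2λ²). -/
open MeasureTheory ProbabilityTheory

/-- `X` is sub-exponential with parameters `(ν, b)` with respect to `P`. -/
def IsSubExponential {Ω : Type*} [MeasurableSpace Ω] (P : Measure Ω) (X : Ω → ℝ)
    (ν b : ℝ) : Prop :=
  0 < ν ∧ 0 < b ∧ Measurable X ∧ Integrable X P ∧
    ∀ l : ℝ, l ∈ Set.Ioo (-(1 / b)) (1 / b) →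
      (∫⁻ ω, ENNReal.ofReal (Real.exp (l * (X ω - ∫ x, X x ∂P))) ∂P)
        ≤ ENNReal.ofReal (Real.exp (l ^ 2 * ν ^ 2 / 2))

/-!
Write `p = P A` and `g = (1 - 2λ)^{-1/2} = E[exp(λX²)]`. Independence gives
`E[X² 1_A] = p` and `E[exp(λ X² 1_A)] = p g + (1 - p)`, so the claim is the real inequality
`exp(-λp) (p g + 1 - p) ≤ exp(2λ²)`. Since `√(1 - 2λ) ≤ 1 - λ`, we have
`p g + 1 - p ≤ g (1 - (1 - p) λ) ≤ g exp(-(1 - p) λ)`, and `g ≤ exp(λ + 2λ²)` follows from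
`exp(-(z + z²)) ≤ 1 - z` at `z = 2λ`.
-/

open Real
open scoped NNReal

lemma one_le_one_sub_two_mul_mul_exp {l : ℝ} (hl : l ≤ 1 / 4) :
    1 ≤ (1 - 2 * l) * exp (2 * l + 4 * l ^ 2) := by
  rcases le_or_gt l 0 with hl0 | hl0
  · nlinarith [add_one_le_exp (2 * l + 4 * l ^ 2),
      mul_nonpos_of_nonneg_of_nonpos (sq_nonneg l) hl0]
  · have := quadratic_le_exp_of_nonneg (x := 2 * l + 4 * l ^ 2) (by positivity)
    nlinarith [pow_pos hl0 2, pow_pos hl0 3, pow_pos hl0 4, pow_pos hl0 5]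

lemma inv_sqrt_one_sub_two_mul_le_exp {l : ℝ} (hl : l ≤ 1 / 4) :
    (√(1 - 2 * l))⁻¹ ≤ exp (l + 2 * l ^ 2) := by
  have hs : 0 < √(1 - 2 * l) := sqrt_pos.mpr (by linarith)
  rw [inv_le_iff_one_le_mul₀ hs, ← pow_le_pow_iff_left₀ zero_le_one (by positivity) two_ne_zero,
    mul_pow, sq_sqrt (by linarith), ← exp_nat_mul, one_pow]
  refine (one_le_one_sub_two_mul_mul_exp hl).trans_eq ?_
  push_cast
  ring_nf

lemma exp_neg_mul_mul_add_one_sub_le {l p : ℝ} (hl : l ≤ 1 / 4) (hp₀ : 0 ≤ p) (hp₁ : p ≤ 1) :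
    exp (-(l * p)) * (p * (√(1 - 2 * l))⁻¹ + (1 - p)) ≤ exp (2 * l ^ 2) := by
  set s := √(1 - 2 * l)
  have hs : 0 < s := sqrt_pos.mpr (by linarith)
  have hs_le : s ≤ 1 - l := sqrt_le_iff.mpr ⟨by linarith, by nlinarith [sq_nonneg l]⟩
  calc exp (-(l * p)) * (p * s⁻¹ + (1 - p))
      = exp (-(l * p)) * s⁻¹ * (p + (1 - p) * s) := by field_simp
    _ ≤ exp (-(l * p)) * exp (l + 2 * l ^ 2) * exp (-((1 - p) * l)) := by
        gcongr
        · exact inv_sqrt_one_sub_two_mul_le_exp hl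
        · nlinarith [add_one_le_exp (-((1 - p) * l))]
    _ = exp (2 * l ^ 2) := by rw [← exp_add, ← exp_add]; ring_nf

lemma lintegral_exp_mul_sq_gaussianReal {v : ℝ≥0} (hv : v ≠ 0) {l : ℝ} (hl : 2 * v * l < 1) :
    ∫⁻ x, ENNReal.ofReal (exp (l * x ^ 2)) ∂gaussianReal 0 v
      = ENNReal.ofReal (√(1 - 2 * v * l))⁻¹ := by
  set b := 1 / (2 * v) - l
  have hb : 0 < b := by
    simp only [b, sub_pos]
    rw [lt_div_iff₀ (by positivity)]
    linarith
  have hdens : ∀ x, gaussianPDF 0 v x * ENNReal.ofReal (exp (l * x ^ 2))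
      = ENNReal.ofReal ((√(2 * π * v))⁻¹ * exp (-b * x ^ 2)) := by
    intro x
    rw [gaussianPDF, ← ENNReal.ofReal_mul (gaussianPDFReal_nonneg 0 v x), gaussianPDFReal,
      mul_assoc, ← exp_add]
    congr 3
    simp only [b]
    field_simp
    ring
  rw [gaussianReal_of_var_ne_zero 0 hv, lintegral_withDensity_eq_lintegral_mul _
    (measurable_gaussianPDF 0 v) (by fun_prop)]
  simp only [Pi.mul_apply, hdens]
  rw [← ofReal_integral_eq_lintegral_ofReal ((integrable_exp_neg_mul_sq hb).const_mul _)
    (ae_of_all _ fun x => by positivity), integral_const_mul, integral_gaussian]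
  congr 1
  have : π / b = 2 * π * v / (1 - 2 * v * l) := by
    simp only [b]; field_simp
  rw [this, sqrt_div' _ (by linarith), div_eq_mul_inv, ← mul_assoc,
    inv_mul_cancel₀ (by positivity), one_mul]

lemma ProbabilityTheory.HasLaw.integral_sq_of_gaussianReal {Ω : Type*} [MeasurableSpace Ω]
    {P : Measure Ω} {X : Ω → ℝ} {v : ℝ≥0} (hX : HasLaw X (gaussianReal 0 v) P) :
    ∫ ω, X ω ^ 2 ∂P = v := by
  rw [← variance_of_integral_eq_zero hX.aemeasurable
    (by rw [hX.integral_eq, integral_id_gaussianReal]), hX.variance_eq, variance_id_gaussianReal]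

section Indicator

variable {Ω : Type*} [MeasurableSpace Ω] {P : Measure Ω} {Z : Ω → ℝ} {A : Set Ω}

lemma MeasureTheory.Integrable.mul_indicator_one (hZ : Integrable Z P) (hA : MeasurableSet A) :
    Integrable (fun ω => Z ω * A.indicator (fun _ => (1 : ℝ)) ω) P := by
  refine hZ.mul_bdd (measurable_const.indicator hA).aestronglyMeasurable (c := 1)
    (ae_of_all _ fun ω => ?_)
  by_cases hω : ω ∈ A <;> simp [hω]

lemma ProbabilityTheory.IndepFun.integral_mul_indicator_one (hZ : AEStronglyMeasurable Z P)
    (hA : MeasurableSet A) (hindep : IndepFun Z (A.indicator fun _ => (1 : ℝ)) P) :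
    ∫ ω, Z ω * A.indicator (fun _ => (1 : ℝ)) ω ∂P = (∫ ω, Z ω ∂P) * P.real A := by
  rw [hindep.integral_fun_mul_eq_mul_integral hZ
    (measurable_const.indicator hA).aestronglyMeasurable, integral_indicator_const _ hA,
    smul_eq_mul, mul_one]

lemma lintegral_exp_mul_mul_indicator_of_indepFun (hZ : Measurable Z) (hA : MeasurableSet A)
    (hindep : IndepFun Z (A.indicator fun _ => (1 : ℝ)) P) (l : ℝ) :
    ∫⁻ ω, ENNReal.ofReal (exp (l * (Z ω * A.indicator (fun _ => (1 : ℝ)) ω))) ∂P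
      = (∫⁻ ω, ENNReal.ofReal (exp (l * Z ω)) ∂P) * P A + P Aᶜ := by
  have hind : (fun ω => ENNReal.ofReal (A.indicator (fun _ => (1 : ℝ)) ω)) = A.indicator 1 := by
    ext ω
    by_cases hω : ω ∈ A <;> simp [hω]
  have hsplit : ∀ ω, ENNReal.ofReal (exp (l * (Z ω * A.indicator (fun _ => (1 : ℝ)) ω)))
      = ENNReal.ofReal (exp (l * Z ω)) * A.indicator 1 ω + Aᶜ.indicator 1 ω := by
    intro ω
    by_cases hω : ω ∈ A <;> simp [hω]
  have hindep' :
      IndepFun (fun ω => ENNReal.ofReal (exp (l * Z ω))) (A.indicator (1 : Ω → ENNReal)) P := by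
    rw [← hind]
    exact hindep.comp (by fun_prop : Measurable fun z => ENNReal.ofReal (exp (l * z)))
      ENNReal.measurable_ofReal
  rw [lintegral_congr hsplit, lintegral_add_left (by fun_prop),
    lintegral_mul_eq_lintegral_mul_lintegral_of_indepFun'' (by fun_prop)
      (measurable_one.indicator hA).aemeasurable hindep',
    lintegral_indicator_one hA, lintegral_indicator_one hA.compl]

lemma lintegral_exp_mul_sub_mul_indicator_of_indepFun [IsProbabilityMeasure P]
    (hZ : Measurable Z) (hA : MeasurableSet A)
    (hindep : IndepFun Z (A.indicator fun _ => (1 : ℝ)) P) {l m : ℝ} (hm : 0 ≤ m)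
    (hmgf : ∫⁻ ω, ENNReal.ofReal (exp (l * Z ω)) ∂P = ENNReal.ofReal m) (c : ℝ) :
    ∫⁻ ω, ENNReal.ofReal (exp (l * (Z ω * A.indicator (fun _ => (1 : ℝ)) ω - c))) ∂P
      = ENNReal.ofReal (exp (-(l * c)) * (P.real A * m + (1 - P.real A))) := by
  have hcenter : ∀ ω, ENNReal.ofReal (exp (l * (Z ω * A.indicator (fun _ => (1 : ℝ)) ω - c)))
      = ENNReal.ofReal (exp (l * (Z ω * A.indicator (fun _ => (1 : ℝ)) ω)))
        * ENNReal.ofReal (exp (-(l * c))) := by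
    intro ω
    rw [← ENNReal.ofReal_mul (exp_pos _).le, ← exp_add]
    ring_nf
  have hp₁ : P.real A ≤ 1 := measureReal_le_one
  rw [lintegral_congr hcenter, lintegral_mul_const _ (by fun_prop),
    lintegral_exp_mul_mul_indicator_of_indepFun hZ hA hindep, hmgf, ← ofReal_measureReal,
    ← ofReal_measureReal, probReal_compl_eq_one_sub hA, ← ENNReal.ofReal_mul hm,
    ← ENNReal.ofReal_add (by positivity) (by linarith), ← ENNReal.ofReal_mul (by positivity)]
  ring_nf

end Indicator

/-- If `X` is standard normal, `A` is an event independent of `X`, then `X² ⋅ 1_A` is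
sub-exponential with parameters `(2, 4)`. -/
theorem isSubExponential_sq_mul_indicator
    {Ω : Type*} [MeasurableSpace Ω] (P : Measure Ω) [IsProbabilityMeasure P]
    (X : Ω → ℝ) (hXm : Measurable X)
    (hX : Measure.map X P = gaussianReal 0 1)
    (A : Set Ω) (hA : MeasurableSet A)
    (hindep : IndepFun X (A.indicator (fun _ => (1 : ℝ))) P) :
    IsSubExponential P (fun ω => X ω ^ 2 * A.indicator (fun _ => (1 : ℝ)) ω) 2 4 := by
  have hlaw : HasLaw X (gaussianReal 0 1) P := ⟨hXm.aemeasurable, hX⟩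
  have hX2 : Integrable (fun ω => X ω ^ 2) P :=
    ((memLp_id_gaussianReal 2).comp_measurePreserving (hlaw.measurePreserving hXm)).integrable_sq
  have hindep₂ : IndepFun (fun ω => X ω ^ 2) (A.indicator fun _ => (1 : ℝ)) P :=
    hindep.comp (measurable_id.pow_const 2) measurable_id
  have hmean : ∫ ω, X ω ^ 2 * A.indicator (fun _ => (1 : ℝ)) ω ∂P = P.real A := by
    rw [hindep₂.integral_mul_indicator_one hX2.aestronglyMeasurable hA,
      hlaw.integral_sq_of_gaussianReal, NNReal.coe_one, one_mul]
  refine ⟨two_pos, four_pos, (hXm.pow_const 2).mul (measurable_const.indicator hA),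
    hX2.mul_indicator_one hA, fun l ⟨_, hl⟩ => ?_⟩
  have hmgf : ∫⁻ ω, ENNReal.ofReal (exp (l * X ω ^ 2)) ∂P = ENNReal.ofReal (√(1 - 2 * l))⁻¹ := by
    rw [hlaw.lintegral_comp (f := fun x => ENNReal.ofReal (exp (l * x ^ 2))) (by fun_prop),
      lintegral_exp_mul_sq_gaussianReal one_ne_zero (by norm_num at hl ⊢; linarith)]
    norm_num
  rw [hmean, lintegral_exp_mul_sub_mul_indicator_of_indepFun (hXm.pow_const 2) hA hindep₂
    (by positivity) hmgf]
  refine ENNReal.ofReal_le_ofReal ((exp_neg_mul_mul_add_one_sub_le (by linarith)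
    measureReal_nonneg measureReal_le_one).trans_eq ?_)
  ring_nf
end

section
/- Let X₁,...,Xₙ be normal random variables with Var[Xᵢ] = σᵢ² and let A₁,...,Aₙ be events such that X₁,...,Xₙ, 1_{A₁},...,1_{Aₙ} are all independent. Then Σᵢ |Xᵢ - E[Xᵢ]|² 1_{Aᵢ} is sub-exponential with parameters (2(Σᵢ σᵢ⁴)^{1/2}, 4 max{σ₁²,...,σₙ²}). -/
open MeasureTheory ProbabilityTheory

/-!
Write `Yᵢ = (Xᵢ - μᵢ)² 1_{Aᵢ}`. The pairs `(Xᵢ, 1_{Aᵢ})` are independent, hence so are the `Yᵢ`,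
and independent summands with parameters `(νᵢ, bᵢ)` add up to parameters
`((Σ νᵢ²)^{1/2}, max bᵢ)`; so it suffices that each `Yᵢ` has parameters `(2σᵢ², 4σᵢ²)`.
With `p = P(Aᵢ)` and `t = λσᵢ²`, the chi-square moment generating function gives
`E exp(λYᵢ) = 1 - p + p (1 - 2t)^{-1/2}`, and for `|t| ≤ 1/4` the elementary bound
`e^{-pt} (1 - p + p (1 - 2t)^{-1/2}) ≤ e^{2t²}` is the required estimate.
-/

open Real Set
open scoped NNReal

lemma neg_log_one_sub_le {s : ℝ} (hs : |s| ≤ 1 / 2) : -log (1 - s) ≤ s + s ^ 2 := by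
  obtain ⟨hs₁, hs₂⟩ := abs_le.mp hs
  have key : 1 ≤ exp (s + s ^ 2) * (1 - s) := by
    rcases le_or_gt s 0 with hneg | hpos
    · have h := mul_le_mul_of_nonneg_right (add_one_le_exp (s + s ^ 2)) (by linarith : 0 ≤ 1 - s)
      nlinarith [pow_two_nonneg s]
    · have h := mul_le_mul_of_nonneg_right
        (quadratic_le_exp_of_nonneg (by positivity : 0 ≤ s + s ^ 2)) (by linarith : 0 ≤ 1 - s)
      nlinarith [pow_pos hpos 3, mul_pos hpos hpos]
  have h := log_nonneg key
  rw [log_mul (exp_pos _).ne' (by linarith), log_exp] at h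
  linarith

lemma inv_sqrt_one_sub_two_mul_le {t : ℝ} (ht : |t| ≤ 1 / 4) :
    (√(1 - 2 * t))⁻¹ ≤ exp (t + 2 * t ^ 2) := by
  have hpos : 0 < 1 - 2 * t := by linarith [(abs_le.mp ht).2]
  have hlog := neg_log_one_sub_le (s := 2 * t) (by rw [abs_mul]; norm_num; linarith)
  rw [sqrt_eq_rpow, ← rpow_neg hpos.le, rpow_def_of_pos hpos, exp_le_exp]
  nlinarith

lemma exp_neg_mul_mul_one_add_mul_inv_sqrt_sub_one_le {p t : ℝ} (hp : p ≤ 1)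
    (ht : |t| ≤ 1 / 4) :
    exp (-(p * t)) * (1 + p * ((√(1 - 2 * t))⁻¹ - 1)) ≤ exp (2 * t ^ 2) := by
  obtain ⟨ht₁, ht₂⟩ := abs_le.mp ht
  set M := (√(1 - 2 * t))⁻¹
  -- `√(1 - 2t) ≤ 1 - t`, which lets the factor `1 - p` be absorbed into `M`.
  have hM : 1 ≤ M * (1 - t) := by
    rw [← div_eq_inv_mul, one_le_div₀ (sqrt_pos.mpr (by linarith))]
    exact sqrt_le_iff.mpr ⟨by linarith, by nlinarith [sq_nonneg t]⟩
  have hM₀ : 0 ≤ M := by positivity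
  calc exp (-(p * t)) * (1 + p * (M - 1))
      ≤ exp (-(p * t)) * (M * exp ((p - 1) * t)) := by
        gcongr
        calc 1 + p * (M - 1) ≤ M * (1 + (p - 1) * t) := by
              nlinarith [mul_nonneg (sub_nonneg.mpr hp) (sub_nonneg.mpr hM)]
          _ ≤ M * exp ((p - 1) * t) := by gcongr; linarith [add_one_le_exp ((p - 1) * t)]
    _ = M * exp (-t) := by rw [mul_left_comm, ← exp_add]; ring_nf
    _ ≤ exp (t + 2 * t ^ 2) * exp (-t) := by gcongr; exact inv_sqrt_one_sub_two_mul_le ht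
    _ = exp (2 * t ^ 2) := by rw [← exp_add]; ring_nf

lemma mgf_sq_gaussianReal (v : ℝ≥0) {t : ℝ} (ht : 2 * t * v < 1) :
    mgf (fun x ↦ x ^ 2) (gaussianReal 0 v) t = (√(1 - 2 * t * v))⁻¹ := by
  rcases eq_or_ne v 0 with rfl | hv
  · simp [gaussianReal_zero_var, mgf_dirac']
  have hv₀ : (0 : ℝ) < v := by positivity
  have ht' : 0 < 1 - 2 * t * v := by linarith
  calc mgf (fun x ↦ x ^ 2) (gaussianReal 0 v) t
      = (√(2 * π * v))⁻¹ * ∫ x, exp (-((1 - 2 * t * v) / (2 * v)) * x ^ 2) := by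
        rw [mgf, integral_gaussianReal_eq_integral_smul hv, ← integral_const_mul]
        congr with x
        rw [gaussianPDFReal, smul_eq_mul, mul_assoc, ← exp_add]
        congr 2
        field_simp
        ring
    _ = (√(1 - 2 * t * v))⁻¹ := by
        rw [integral_gaussian, div_div_eq_mul_div, sqrt_div' _ ht'.le, mul_div_assoc',
          show π * (2 * (v : ℝ)) = 2 * π * v by ring, inv_mul_cancel₀ (by positivity), one_div]

namespace ProbabilityTheory

variable {Ω : Type*} {mΩ : MeasurableSpace Ω} {P : Measure Ω}

lemma integral_sq_sub_of_hasLaw_gaussianReal {X : Ω → ℝ} {μ : ℝ} {v : ℝ≥0}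
    (hX : HasLaw X (gaussianReal μ v) P) : ∫ ω, (X ω - μ) ^ 2 ∂P = v := by
  have h := hX.variance_eq
  rwa [variance_id_gaussianReal, variance_eq_integral hX.aemeasurable, hX.integral_eq,
    integral_id_gaussianReal] at h

lemma mgf_sq_sub_of_hasLaw_gaussianReal {X : Ω → ℝ} {μ : ℝ} {v : ℝ≥0}
    (hX : HasLaw X (gaussianReal μ v) P) {l : ℝ} (hl : 2 * l * v < 1) :
    mgf (fun ω ↦ (X ω - μ) ^ 2) P l = (√(1 - 2 * l * v))⁻¹ := by
  have hXμ : HasLaw (fun ω ↦ X ω - μ) (gaussianReal 0 v) P := by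
    simpa using gaussianReal_sub_const hX μ
  rw [← mgf_sq_gaussianReal v hl, ← hXμ.map_eq, mgf_map hXμ.aemeasurable (by fun_prop)]
  rfl

variable [IsProbabilityMeasure P]

lemma iIndepFun.prodMk_of_sumElim {ι α : Type*} [Fintype ι] {mα : MeasurableSpace α}
    {f g : ι → Ω → α} (hf : ∀ i, Measurable (f i)) (hg : ∀ i, Measurable (g i))
    (h : iIndepFun (Sum.elim f g) P) :
    iIndepFun (fun i ω ↦ (f i ω, g i ω)) P := by
  have hpair : ∀ i, HasLaw (fun ω ↦ (f i ω, g i ω)) ((P.map (f i)).prod (P.map (g i))) P :=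
    fun i ↦ (h.indepFun (Sum.inl_ne_inr (a := i) (b := i))).hasLaw_prod
      ⟨(hf i).aemeasurable, rfl⟩ ⟨(hg i).aemeasurable, rfl⟩
  rw [iIndepFun_iff_hasLaw_pi_pi hpair]
  exact ((measurePreserving_arrowProdEquivProdArrow α α ι (fun i ↦ P.map (f i))
    (fun i ↦ P.map (g i))).symm.comp (measurePreserving_sumPiEquivProdPi
      (fun k ↦ P.map (Sum.elim f g k)))).comp_hasLaw
    (h.hasLaw_pi fun k ↦ ⟨(Sum.rec hf hg k : Measurable (Sum.elim f g k)).aemeasurable, rfl⟩)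

lemma IndepFun.mgf_mul_indicator {Z : Ω → ℝ} {A : Set Ω} {t : ℝ} (hA : MeasurableSet A)
    (hZA : Z ⟂ᵢ[P] A.indicator (fun _ ↦ (1 : ℝ)))
    (hint : Integrable (fun ω ↦ exp (t * Z ω)) P) :
    mgf (fun ω ↦ Z ω * A.indicator (fun _ ↦ 1) ω) P t = 1 + P.real A * (mgf Z P t - 1) := by
  have hpt : ∀ ω, exp (t * (Z ω * A.indicator (fun _ ↦ 1) ω))
      = 1 + (exp (t * Z ω) - 1) * A.indicator (fun _ ↦ 1) ω := fun ω ↦ by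
    by_cases hω : ω ∈ A <;> simp [hω]
  have hind : (fun ω ↦ exp (t * Z ω) - 1) ⟂ᵢ[P] A.indicator (fun _ ↦ (1 : ℝ)) :=
    hZA.comp (φ := fun z ↦ exp (t * z) - 1) (by fun_prop) measurable_id
  have hind_int : Integrable (A.indicator (fun _ ↦ (1 : ℝ))) P :=
    (integrable_const 1).indicator hA
  have hprod : Integrable (fun ω ↦ (exp (t * Z ω) - 1) * A.indicator (fun _ ↦ 1) ω) P :=
    hind.integrable_mul (hint.sub (integrable_const 1)) hind_int
  rw [mgf, integral_congr_ae (.of_forall hpt), integral_add (integrable_const 1) hprod,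
    hind.integral_fun_mul_eq_mul_integral (hint.sub (integrable_const 1)).aestronglyMeasurable
      hind_int.aestronglyMeasurable,
    integral_sub hint (integrable_const 1), integral_indicator_const _ hA]
  simp only [integral_const, probReal_univ, smul_eq_mul, mul_one, mgf, add_right_inj]
  ring

end ProbabilityTheory

section SubExponential

variable {Ω : Type*} {mΩ : MeasurableSpace Ω} {P : Measure Ω}

lemma lintegral_ofReal_le_ofReal_iff {f : Ω → ℝ} {c : ℝ} (hf₀ : 0 ≤ f)
    (hf : AEStronglyMeasurable f P) (hc : 0 ≤ c) :
    ∫⁻ ω, ENNReal.ofReal (f ω) ∂P ≤ ENNReal.ofReal c ↔ Integrable f P ∧ ∫ ω, f ω ∂P ≤ c := by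
  have hf₀' : 0 ≤ᵐ[P] f := .of_forall hf₀
  constructor
  · intro h
    have hint : Integrable f P :=
      ⟨hf, (hasFiniteIntegral_iff_ofReal hf₀').mpr (h.trans_lt ENNReal.ofReal_lt_top)⟩
    refine ⟨hint, ?_⟩
    rw [integral_eq_lintegral_of_nonneg_ae hf₀' hf]
    exact ENNReal.toReal_le_of_le_ofReal hc h
  · rintro ⟨hint, h⟩
    rw [← ofReal_integral_eq_lintegral_ofReal hint hf₀']
    exact ENNReal.ofReal_le_ofReal h

lemma isSubExponential_iff {X : Ω → ℝ} {ν b : ℝ} :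
    IsSubExponential P X ν b ↔ 0 < ν ∧ 0 < b ∧ Measurable X ∧ Integrable X P ∧
      ∀ l ∈ Ioo (-(1 / b)) (1 / b), Integrable (fun ω ↦ exp (l * (X ω - P[X]))) P ∧
        mgf (fun ω ↦ X ω - P[X]) P l ≤ exp (l ^ 2 * ν ^ 2 / 2) := by
  refine and_congr_right fun _ ↦ and_congr_right fun _ ↦ and_congr_right fun hX ↦
    and_congr_right fun _ ↦ forall₂_congr fun l _ ↦ ?_
  exact lintegral_ofReal_le_ofReal_iff (fun _ ↦ (exp_pos _).le) (by fun_prop) (exp_pos _).le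

variable [IsProbabilityMeasure P]

lemma IsSubExponential.sum {ι : Type*} [Fintype ι] {Y : ι → Ω → ℝ} (hY : iIndepFun Y P)
    (hι : (Finset.univ : Finset ι).Nonempty) {ν b : ι → ℝ}
    (h : ∀ i, IsSubExponential P (Y i) (ν i) (b i)) :
    IsSubExponential P (fun ω ↦ ∑ i, Y i ω) √(∑ i, ν i ^ 2) (Finset.univ.sup' hι b) := by
  simp only [isSubExponential_iff] at h ⊢
  have hYm : ∀ i, Measurable (Y i) := fun i ↦ (h i).2.2.1
  have hYint : ∀ i, Integrable (Y i) P := fun i ↦ (h i).2.2.2.1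
  obtain ⟨i₀, -⟩ := hι
  refine ⟨sqrt_pos.mpr (Finset.sum_pos (fun i _ ↦ pow_pos (h i).1 2) ⟨i₀, Finset.mem_univ _⟩),
    (h i₀).2.1.trans_le (Finset.le_sup' b (Finset.mem_univ _)),
    Finset.measurable_sum _ fun i _ ↦ hYm i, integrable_finsetSum _ fun i _ ↦ hYint i,
    fun l hl ↦ ?_⟩
  have hl_mem : ∀ i, l ∈ Ioo (-(1 / b i)) (1 / b i) := fun i ↦ by
    have : 1 / Finset.univ.sup' _ b ≤ 1 / b i :=
      one_div_le_one_div_of_le (h i).2.1 (Finset.le_sup' b (Finset.mem_univ i))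
    exact ⟨by linarith [hl.1], hl.2.trans_le this⟩
  set Z : ι → Ω → ℝ := fun i ω ↦ Y i ω - P[Y i]
  have hZ : iIndepFun Z P :=
    hY.comp (fun i (y : ℝ) ↦ y - ∫ ω, Y i ω ∂P) fun _ ↦ measurable_sub_const _
  have hZm : ∀ i, Measurable (Z i) := fun i ↦ (hYm i).sub_const _
  have hcenter : ∀ ω, ∑ i, Y i ω - P[fun ω ↦ ∑ i, Y i ω] = (∑ i, Z i) ω := by
    simp [Z, integral_finsetSum _ fun i _ ↦ hYint i]
  simp only [hcenter]
  rw [hZ.mgf_sum hZm]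
  refine ⟨hZ.integrable_exp_mul_sum hZm fun i _ ↦ ((h i).2.2.2.2 l (hl_mem i)).1, ?_⟩
  calc ∏ i, mgf (Z i) P l ≤ ∏ i, exp (l ^ 2 * ν i ^ 2 / 2) :=
        Finset.prod_le_prod (fun i _ ↦ mgf_nonneg) fun i _ ↦ ((h i).2.2.2.2 l (hl_mem i)).2
    _ = exp (l ^ 2 * √(∑ i, ν i ^ 2) ^ 2 / 2) := by
        rw [← exp_sum, sq_sqrt (Finset.sum_nonneg fun i _ ↦ sq_nonneg _), Finset.mul_sum,
          Finset.sum_div]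

lemma isSubExponential_sq_sub_mul_indicator {X : Ω → ℝ} {μ : ℝ} {v : ℝ≥0} {A : Set Ω}
    (hv : v ≠ 0) (hXm : Measurable X) (hX : HasLaw X (gaussianReal μ v) P)
    (hA : MeasurableSet A) (hXA : X ⟂ᵢ[P] A.indicator (fun _ ↦ (1 : ℝ))) :
    IsSubExponential P (fun ω ↦ (X ω - μ) ^ 2 * A.indicator (fun _ ↦ 1) ω) (2 * v) (4 * v) := by
  set Z : Ω → ℝ := fun ω ↦ (X ω - μ) ^ 2
  have hv₀ : (0 : ℝ) < v := by positivity
  have hp₀ : 0 ≤ P.real A := measureReal_nonneg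
  have hp₁ : P.real A ≤ 1 := measureReal_le_one
  have hZA : Z ⟂ᵢ[P] A.indicator (fun _ ↦ (1 : ℝ)) :=
    hXA.comp (φ := fun x ↦ (x - μ) ^ 2) (by fun_prop) measurable_id
  have hEZ : P[Z] = (v : ℝ) := integral_sq_sub_of_hasLaw_gaussianReal hX
  have hind_int : Integrable (A.indicator (fun _ ↦ (1 : ℝ))) P :=
    (integrable_const 1).indicator hA
  have hZ_int : Integrable Z P := .of_integral_ne_zero (by rw [hEZ]; exact hv₀.ne')
  have hEY : P[fun ω ↦ Z ω * A.indicator (fun _ ↦ 1) ω] = (v : ℝ) * P.real A := by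
    rw [hZA.integral_fun_mul_eq_mul_integral hZ_int.aestronglyMeasurable
      hind_int.aestronglyMeasurable, hEZ, integral_indicator_const _ hA, smul_eq_mul, mul_one]
  rw [isSubExponential_iff]
  refine ⟨by positivity, by positivity, by fun_prop, hZA.integrable_mul hZ_int hind_int,
    fun l hl ↦ ?_⟩
  have hlv : |l| * (4 * v) < 1 := (lt_div_iff₀ (by positivity)).mp (abs_lt.mpr hl)
  have ht : |l * v| ≤ 1 / 4 := by rw [abs_mul, abs_of_pos hv₀]; linarith
  have hl₂ : 2 * l * v < 1 := by nlinarith [le_abs_self l]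
  set M := (√(1 - 2 * (l * v)))⁻¹
  have hM : 0 < M := inv_pos.mpr (sqrt_pos.mpr (by linarith))
  have hmgfZ : mgf Z P l = M := by rw [mgf_sq_sub_of_hasLaw_gaussianReal hX hl₂, mul_assoc]
  have hmgf : mgf (fun ω ↦ Z ω * A.indicator (fun _ ↦ 1) ω - v * P.real A) P l
      = exp (-(P.real A * (l * v))) * (1 + P.real A * (M - 1)) := by
    simp_rw [sub_eq_add_neg (_ * _)]
    rw [mgf_add_const, hZA.mgf_mul_indicator hA (mgf_pos_iff.mp (hmgfZ ▸ hM)), hmgfZ]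
    ring_nf
  rw [hEY]
  refine ⟨mgf_pos_iff.mp ?_, ?_⟩
  · have : 0 < 1 + P.real A * (M - 1) := by rcases le_total 1 M with h | h <;> nlinarith
    rw [hmgf]
    positivity
  · rw [hmgf]
    convert exp_neg_mul_mul_one_add_mul_inv_sqrt_sub_one_le hp₁ ht using 2
    ring

end SubExponential

/-- If `X₁, …, Xₙ` are normal with variances `σᵢ²` and `A₁, …, Aₙ` are events such that
`X₁, …, Xₙ, 1_{A₁}, …, 1_{Aₙ}` are all independent, then `Σᵢ |Xᵢ - E[Xᵢ]|² 1_{Aᵢ}` is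
sub-exponential with parameters `(2 (Σᵢ σᵢ⁴)^{1/2}, 4 maxᵢ σᵢ²)`. -/
theorem isSubExponential_sum_sq_mul_indicator
    {Ω : Type*} [MeasurableSpace Ω] (P : Measure Ω) [IsProbabilityMeasure P]
    (n : ℕ) (hn : 0 < n) (σ μ : Fin n → ℝ) (hσ : ∀ i, σ i ≠ 0)
    (X : Fin n → Ω → ℝ) (hXm : ∀ i, Measurable (X i))
    (A : Fin n → Set Ω) (hA : ∀ i, MeasurableSet (A i))
    (hlaw : ∀ i, Measure.map (X i) P = gaussianReal (μ i) (Real.toNNReal ((σ i) ^ 2)))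
    (hindep : iIndepFun (m := fun _ : Fin n ⊕ Fin n => (inferInstance : MeasurableSpace ℝ))
      (Sum.elim X (fun j => (A j).indicator (fun _ => (1 : ℝ)))) P) :
    IsSubExponential P
      (fun ω => ∑ i, |X i ω - ∫ x, X i x ∂P| ^ 2 * (A i).indicator (fun _ => (1 : ℝ)) ω)
      (2 * Real.sqrt (∑ i, (σ i) ^ 4))
      (4 * Finset.univ.sup' ⟨⟨0, hn⟩, Finset.mem_univ _⟩ (fun i => (σ i) ^ 2)) := by
  have hXlaw : ∀ i, HasLaw (X i) (gaussianReal (μ i) ((σ i) ^ 2).toNNReal) P :=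
    fun i ↦ ⟨(hXm i).aemeasurable, hlaw i⟩
  have hmean : ∀ i, ∫ x, X i x ∂P = μ i := fun i ↦ by
    rw [(hXlaw i).integral_eq, integral_id_gaussianReal]
  have hY : iIndepFun (fun i ω ↦ (X i ω - μ i) ^ 2 * (A i).indicator (fun _ ↦ 1) ω) P :=
    (hindep.prodMk_of_sumElim hXm fun i ↦ measurable_const.indicator (hA i)).comp
      (fun i q ↦ (q.1 - μ i) ^ 2 * q.2) fun _ ↦ by fun_prop
  have hYi : ∀ i, IsSubExponential P (fun ω ↦ (X i ω - μ i) ^ 2 * (A i).indicator (fun _ ↦ 1) ω)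
      (2 * (σ i) ^ 2) (4 * (σ i) ^ 2) := fun i ↦ by
    simpa [Real.coe_toNNReal _ (sq_nonneg _)] using
      isSubExponential_sq_sub_mul_indicator (by simpa using hσ i) (hXm i) (hXlaw i) (hA i)
        (hindep.indepFun Sum.inl_ne_inr)
  convert IsSubExponential.sum hY ⟨⟨0, hn⟩, Finset.mem_univ _⟩ hYi using 1
  · simp [hmean, sq_abs]
  · have h : ∑ i, (2 * σ i ^ 2) ^ 2 = 2 ^ 2 * ∑ i, σ i ^ 4 := by
      rw [Finset.mul_sum]
      exact Finset.sum_congr rfl fun i _ ↦ by ring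
    rw [h, sqrt_mul (by norm_num), sqrt_sq (by norm_num)]
  · exact Finset.apply_sup'_eq_sup'_comp _ (4 * ·)
      fun x y ↦ (monotone_mul_left_of_nonneg (by norm_num)).map_sup x y
end
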